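/- Let x ∈ ℝ⁹ with x₁ ≥ ⋯ ≥ x₉ > 0, and suppose the 3×3 symmetric matrix L₁(x) = [[2x₉, x₈−x₁, x₆−x₂],[x₈−x₁, 2x₇, x₅−x₃],[x₆−x₂, x₅−x₃, 2x₄]] is positive semidefinite. Then x₁ ≤ x₈ + 2√(x₇x₉) ≤ x₇ + x₈ + x₉. Moreover, if x₁ = x₈ + 2√(x₇x₉), then x₂ = x₃ = x₄ = x₅ = x₆. -/

import Mathlib

/-- The Hildebrand matrix `L₁` built from a vector `x ∈ ℝ⁹` (indices `x 0, …, x 8`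
correspond to `x₁, …, x₉`). -/
def L1 (x : Fin 9 → ℝ) : Matrix (Fin 3) (Fin 3) ℝ :=
  !![2 * x 8, x 7 - x 0, x 5 - x 1;
     x 7 - x 0, 2 * x 6, x 4 - x 2;
     x 5 - x 1, x 4 - x 2, 2 * x 3]

/-!
The top-left `2 × 2` principal minor of `L₁` gives `(x₁ - x₈)² ≤ 4 x₇ x₉`, i.e. the first
inequality, and the second one is AM–GM. If the first inequality is an equality, that minor is
singular with kernel spanned by `(√x₇, √x₉)`, so `(√x₇, √x₉, 0)` lies in the kernel of `L₁`. Its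
third row then reads `√x₇ (x₆ - x₂) + √x₉ (x₅ - x₃) = 0`, a sum of two nonpositive terms for
sorted `x`; hence `x₂ = x₆` (or `x₁ = x₈` when `x₇ = 0`), and sortedness squeezes the middle
entries together.
-/

open Matrix
open scoped ComplexOrder

theorem Matrix.PosSemidef.apply_mul_apply_le {n 𝕜 : Type*} [Fintype n] [RCLike 𝕜]
    {A : Matrix n n 𝕜} (hA : A.PosSemidef) (i j : n) :
    A i j * A j i ≤ A i i * A j j := by
  have h := (hA.submatrix ![i, j]).det_nonneg
  rwa [det_fin_two, sub_nonneg] at h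

theorem Antitone.apply_eq_of_le_of_le {α β : Type*} [Preorder α] [PartialOrder β] {f : α → β}
    (hf : Antitone f) {i j k : α} (hik : i ≤ k) (hkj : k ≤ j) (h : f i = f j) : f k = f i :=
  le_antisymm (hf hik) (h.trans_le (hf hkj))

theorem Real.le_two_mul_sqrt_of_sq_le {a b : ℝ} (h : a ^ 2 ≤ 4 * b) : a ≤ 2 * √b := by
  have h4 : √(4 * b) = 2 * √b := by
    rw [Real.sqrt_mul (by norm_num), show (4 : ℝ) = 2 ^ 2 by norm_num, Real.sqrt_sq (by norm_num)]
  exact (le_abs_self a).trans (h4 ▸ Real.abs_le_sqrt h)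

theorem Real.two_mul_sqrt_mul_le_add {a b : ℝ} (ha : 0 ≤ a) (hb : 0 ≤ b) :
    2 * √(a * b) ≤ a + b := by
  rw [Real.sqrt_mul ha]
  nlinarith [two_mul_le_add_sq √a √b, Real.sq_sqrt ha, Real.sq_sqrt hb]

theorem L1_sqrt_combination_eq_zero {x : Fin 9 → ℝ} (hL1 : (L1 x).PosSemidef)
    (h6 : 0 ≤ x 6) (h8 : 0 ≤ x 8) (heq : x 0 = x 7 + 2 * √(x 6 * x 8)) :
    √(x 6) * (x 5 - x 1) + √(x 8) * (x 4 - x 2) = 0 := by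
  set s := √(x 6)
  set t := √(x 8)
  have hs : s ^ 2 = x 6 := Real.sq_sqrt h6
  have ht : t ^ 2 = x 8 := Real.sq_sqrt h8
  have hoff : x 7 - x 0 = -2 * (s * t) := by rw [heq, Real.sqrt_mul h6]; ring
  have hLv : L1 x *ᵥ ![s, t, 0] = ![0, 0, s * (x 5 - x 1) + t * (x 4 - x 2)] := by
    ext i
    fin_cases i <;> simp [L1, mulVec, dotProduct, Fin.sum_univ_succ, hoff, ← hs, ← ht] <;> ring
  have hv : star ![s, t, 0] ⬝ᵥ L1 x *ᵥ ![s, t, 0] = 0 := by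
    simp [hLv, dotProduct, Fin.sum_univ_succ]
  simpa [hLv] using congrFun ((hL1.dotProduct_mulVec_zero_iff _).1 hv) 2

theorem L1_posSemidef_bounds (x : Fin 9 → ℝ)
    (hsort : ∀ i j : Fin 9, i ≤ j → x j ≤ x i)
    (hL1 : (L1 x).PosSemidef) :
    x 0 ≤ x 7 + 2 * Real.sqrt (x 6 * x 8) ∧
    x 7 + 2 * Real.sqrt (x 6 * x 8) ≤ x 6 + x 7 + x 8 ∧
    (x 0 = x 7 + 2 * Real.sqrt (x 6 * x 8) →
      x 1 = x 2 ∧ x 2 = x 3 ∧ x 3 = x 4 ∧ x 4 = x 5) := by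
  have h8 : 0 ≤ x 8 := by simpa [L1] using hL1.diag_nonneg (i := 0)
  have h6 : 0 ≤ x 6 := by simpa [L1] using hL1.diag_nonneg (i := 1)
  have hdisc : (x 0 - x 7) ^ 2 ≤ 4 * (x 6 * x 8) := by
    have h := hL1.apply_mul_apply_le 0 1
    simp only [L1, of_apply, cons_val', cons_val_zero, cons_val_one, empty_val',
      cons_val_fin_one] at h
    nlinarith
  refine ⟨by linarith [Real.le_two_mul_sqrt_of_sq_le hdisc],
    by linarith [Real.two_mul_sqrt_mul_le_add h6 h8], fun heq => ?_⟩
  have hx : Antitone x := fun i j hij => hsort i j hij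
  obtain ⟨i, j, hi, hj, hij⟩ : ∃ i j : Fin 9, i ≤ 1 ∧ 5 ≤ j ∧ x i = x j := by
    rcases h6.eq_or_lt with h6 | h6
    · exact ⟨0, 7, by decide, by decide, by simpa [← h6] using heq⟩
    · have hrow := L1_sqrt_combination_eq_zero hL1 h6.le h8 heq
      have h15 : √(x 6) * (x 5 - x 1) ≤ 0 :=
        mul_nonpos_of_nonneg_of_nonpos (Real.sqrt_nonneg _) (by linarith [hsort 1 5 (by decide)])
      have h24 : √(x 8) * (x 4 - x 2) ≤ 0 :=
        mul_nonpos_of_nonneg_of_nonpos (Real.sqrt_nonneg _) (by linarith [hsort 2 4 (by decide)])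
      have h51 := (mul_eq_zero.1 (by linarith : √(x 6) * (x 5 - x 1) = 0)).resolve_left
        (Real.sqrt_pos.2 h6).ne'
      exact ⟨1, 5, le_rfl, le_rfl, by linarith⟩
  have hk : ∀ k : Fin 9, 1 ≤ k → k ≤ 5 → x k = x i := fun k h1 h5 =>
    hx.apply_eq_of_le_of_le (hi.trans h1) (h5.trans hj) hij
  simp only [hk 1 le_rfl (by decide), hk 2 (by decide) (by decide), hk 3 (by decide) (by decide),
    hk 4 (by decide) (by decide), hk 5 (by decide) le_rfl, and_self]
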